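/- Fix an integer N ≥ 2, reals θ_0, θ_1, …, θ_N > 0 and S_0, S_1, …, S_N ≥ 0, a convex function C : ℝ → ℝ, and functions Q_1, …, Q_N : ℝ → ℝ; for x ∈ ℝ^N let b(x) := S_0/θ_0 + Σ_{n=1}^N (S_n − x_n)/θ_n and Ψ(x) := C(b(0)) − C(b(x)) + Σ_{n=1}^N Q_n(x_n). Then for every x ∈ ℝ^N with all coordinates nonnegative and all distinct indices m ≠ n, Ψ(x) − Ψ(x[n:=0][m:=0]) ≥ ( Ψ(x) − Ψ(x[n:=0]) ) + ( Ψ(x) − Ψ(x[m:=0]) ), where x[i:=t] denotes x with its i-th coordinate replaced by t. (Intra-grouping benefit under concurrent bargaining: the marginal social welfare generated jointly by two APOs is at least the sum of their individual marginal social welfares, so two APOs that merge into a group obtain a weakly larger total payoff—half of the joint marginal welfare—than the sum of their individual concurrent-bargaining payoffs.) -/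

import Mathlib

/-- The MNO's total resource consumption at offloading profile `x`. -/
noncomputable def resourceB {N : ℕ} (θ0 S0 : ℝ) (θ S : Fin N → ℝ)
    (x : Fin N → ℝ) : ℝ :=
  S0 / θ0 + ∑ n, (S n - x n) / θ n

/-- The social welfare of the data-offloading problem. -/
noncomputable def welfare {N : ℕ} (θ0 S0 : ℝ) (θ S : Fin N → ℝ) (C : ℝ → ℝ)
    (Q : Fin N → ℝ → ℝ) (x : Fin N → ℝ) : ℝ :=
  C (resourceB θ0 S0 θ S 0) - C (resourceB θ0 S0 θ S x) + ∑ n, Q n (x n)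

/-!
Removing APO `n` raises the resource consumption `b = b(x)` by `p = x n / θ n ≥ 0`, removing
`m` raises it by `q = x m / θ m ≥ 0`, and removing both raises it by `p + q`; the profit terms
`Q` change additively and cancel. The inequality thus reduces to
`C (b + p) + C (b + q) ≤ C b + C (b + p + q)`, i.e. a convex function has increasing
differences. This is the sum of two Jensen inequalities: `b + p` and `b + q` are the convex
combinations of `b` and `b + p + q` with the swapped weights `q / (p + q)`, `p / (p + q)`.
-/

theorem Fintype.sum_apply_update {ι α M : Type*} [Fintype ι] [DecidableEq ι] [AddCommGroup M]
    (g : ι → α → M) (x : ι → α) (i : ι) (a : α) :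
    ∑ j, g j (Function.update x i a j) = ∑ j, g j (x j) - g i (x i) + g i a := by
  rw [Finset.sum_eq_add_sum_sdiff_singleton_of_mem (Finset.mem_univ i) fun j => g j (x j)]
  simp only [Function.apply_update g, Finset.sum_update_of_mem (Finset.mem_univ i)]
  abel

theorem ConvexOn.map_add_add_map_add_le {𝕜 : Type*} [Field 𝕜] [LinearOrder 𝕜]
    [IsStrictOrderedRing 𝕜] {D : Set 𝕜} {f : 𝕜 → 𝕜} (hf : ConvexOn 𝕜 D f) {a p q : 𝕜}
    (ha : a ∈ D) (hapq : a + p + q ∈ D) (hp : 0 ≤ p) (hq : 0 ≤ q) :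
    f (a + p) + f (a + q) ≤ f a + f (a + p + q) := by
  rcases (add_nonneg hp hq).eq_or_lt with hpq | hpq
  · obtain ⟨rfl, rfl⟩ : p = 0 ∧ q = 0 := ⟨by linarith, by linarith⟩
    simp
  have hsum : q / (p + q) + p / (p + q) = 1 := by field
  have hp' : 0 ≤ p / (p + q) := by positivity
  have hq' : 0 ≤ q / (p + q) := by positivity
  have jensen_p := hf.2 ha hapq hq' hp' hsum
  have jensen_q := hf.2 ha hapq hp' hq' (by rw [add_comm, hsum])
  have hcomb_p : q / (p + q) * a + p / (p + q) * (a + p + q) = a + p := by field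
  have hcomb_q : p / (p + q) * a + q / (p + q) * (a + p + q) = a + q := by field
  simp only [smul_eq_mul, hcomb_p, hcomb_q] at jensen_p jensen_q
  linear_combination jensen_p + jensen_q + (f a + f (a + p + q)) * hsum

theorem resourceB_update {N : ℕ} (θ0 S0 : ℝ) (θ S : Fin N → ℝ) (x : Fin N → ℝ) (n : Fin N)
    (t : ℝ) :
    resourceB θ0 S0 θ S (Function.update x n t) = resourceB θ0 S0 θ S x + (x n - t) / θ n := by
  simp only [resourceB, Fintype.sum_apply_update fun i (y : ℝ) => (S i - y) / θ i]
  ring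

theorem intra_grouping_benefit_concurrent_general {N : ℕ}
    (θ0 : ℝ) (θ : Fin N → ℝ) (hθ : ∀ n, 0 < θ n)
    (S0 : ℝ) (S : Fin N → ℝ)
    (C : ℝ → ℝ) (hC : ConvexOn ℝ Set.univ C)
    (Q : Fin N → ℝ → ℝ) :
    ∀ x : Fin N → ℝ, (∀ i, 0 ≤ x i) → ∀ m n : Fin N, m ≠ n →
      (welfare θ0 S0 θ S C Q x -
          welfare θ0 S0 θ S C Q (Function.update x n 0)) +
        (welfare θ0 S0 θ S C Q x -
          welfare θ0 S0 θ S C Q (Function.update x m 0)) ≤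
      welfare θ0 S0 θ S C Q x -
        welfare θ0 S0 θ S C Q (Function.update (Function.update x n 0) m 0) := by
  intro x hx m n hmn
  have hxm : Function.update x n 0 m = x m := Function.update_of_ne hmn 0 x
  have increasing_differences :=
    hC.map_add_add_map_add_le (Set.mem_univ (resourceB θ0 S0 θ S x)) (Set.mem_univ _)
      (div_nonneg (hx n) (hθ n).le) (div_nonneg (hx m) (hθ m).le)
  simp only [welfare, resourceB_update, Fintype.sum_apply_update Q, hxm, sub_zero]
  linarith

/-- Intra-grouping benefit under concurrent bargaining: the marginal social
welfare generated jointly by two APOs is at least the sum of their individual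
marginal social welfares. -/
theorem intra_grouping_benefit_concurrent {N : ℕ} (hN : 2 ≤ N)
    (θ0 : ℝ) (θ : Fin N → ℝ) (hθ0 : 0 < θ0) (hθ : ∀ n, 0 < θ n)
    (S0 : ℝ) (S : Fin N → ℝ) (hS0 : 0 ≤ S0) (hS : ∀ n, 0 ≤ S n)
    (C : ℝ → ℝ) (hC : ConvexOn ℝ Set.univ C)
    (Q : Fin N → ℝ → ℝ) :
    ∀ x : Fin N → ℝ, (∀ i, 0 ≤ x i) → ∀ m n : Fin N, m ≠ n →
      (welfare θ0 S0 θ S C Q x -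
          welfare θ0 S0 θ S C Q (Function.update x n 0)) +
        (welfare θ0 S0 θ S C Q x -
          welfare θ0 S0 θ S C Q (Function.update x m 0)) ≤
      welfare θ0 S0 θ S C Q x -
        welfare θ0 S0 θ S C Q (Function.update (Function.update x n 0) m 0) :=
  intra_grouping_benefit_concurrent_general θ0 θ hθ S0 S C hC Q
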